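/- Let k be a positive integer such that p = 2^k − 1 is prime, and let n = 2^k · p. Then n is 2-near perfect with omitted divisors 1 and p, i.e. σ(n) = 2n + 1 + p. -/

import Mathlib

open ArithmeticFunction
open scoped ArithmeticFunction.sigma

namespace ArithmeticFunction

theorem sigma_one_two_pow (k : ℕ) : σ 1 (2 ^ k) = mersenne (k + 1) := by
  rw [sigma_one_apply_prime_pow Nat.prime_two, Nat.geomSum_eq le_rfl, mersenne]
  simp

theorem sigma_one_prime {p : ℕ} (hp : p.Prime) : σ 1 p = p + 1 := by
  rw [sigma_one_apply, hp.sum_divisors, add_comm]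

theorem sigma_one_two_pow_mul_of_odd {m : ℕ} (k : ℕ) (hm : Odd m) :
    σ 1 (2 ^ k * m) = mersenne (k + 1) * σ 1 m := by
  rw [isMultiplicative_sigma.map_mul_of_coprime (hm.coprime_two_left.pow_left k),
    sigma_one_two_pow]

end ArithmeticFunction

theorem family_one_is_two_near_perfect_general
    (k p n : ℕ) (hpeq : p = 2 ^ k - 1) (hp : p.Prime)
    (hn : n = 2 ^ k * p) :
    σ 1 n = 2 * n + 1 + p := by
  replace hpeq : p = mersenne k := hpeq
  have hk : k ≠ 0 := by
    rintro rfl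
    exact Nat.not_prime_zero (by simpa [hpeq] using hp)
  have hodd : Odd p := hpeq ▸ mersenne_odd.mpr hk
  have hpow : 2 ^ k = p + 1 := by rw [hpeq, succ_mersenne]
  have hsucc : mersenne (k + 1) = 2 * p + 1 := by rw [mersenne_succ, hpeq]
  rw [hn, sigma_one_two_pow_mul_of_odd k hodd, sigma_one_prime hp, hsucc, hpow]
  ring

theorem family_one_is_two_near_perfect
    (k p n : ℕ) (hk : 0 < k) (hpeq : p = 2 ^ k - 1) (hp : p.Prime)
    (hn : n = 2 ^ k * p) :
    σ 1 n = 2 * n + 1 + p :=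
  family_one_is_two_near_perfect_general k p n hpeq hp hn
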